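/- The resultant product f ⊠ g of two integer polynomials f, g of degrees m, n ≥ 1 equals, up to sign (−1)^{mn}, the resultant of the homogenization f_X(Y) = Y^m f(X/Y) (viewed as a polynomial in Y with coefficients in ℤ[X]) and g(Y); consequently deg(f ⊠ g) = deg(f)·deg(g). -/

import Mathlib

open Polynomial

/-- The image of an integer polynomial in `ℂ[X]`. -/
noncomputable def cmap (f : Polynomial ℤ) : Polynomial ℂ := f.map (Int.castRingHom ℂ)

/-- The resultant product `F ⊠ G = a_m^n b_n^m ∏_{i,j} (X - α_i β_j)`. -/
noncomputable def rprod (F G : Polynomial ℂ) : Polynomial ℂ :=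
  C (F.leadingCoeff ^ G.natDegree * G.leadingCoeff ^ F.natDegree) *
    (F.roots.bind fun α => G.roots.map fun β => X - C (α * β)).prod

/-- The resultant sum `F ⊞ G = a_m^n b_n^m ∏_{i,j} (X - (α_i + β_j))`. -/
noncomputable def rsum (F G : Polynomial ℂ) : Polynomial ℂ :=
  C (F.leadingCoeff ^ G.natDegree * G.leadingCoeff ^ F.natDegree) *
    (F.roots.bind fun α => G.roots.map fun β => X - C (α + β)).prod

/-- The resultant difference `F ⊟ G = a_m^n b_n^m ∏_{i,j} (X - (α_i - β_j))`. -/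
noncomputable def rdiff (F G : Polynomial ℂ) : Polynomial ℂ :=
  C (F.leadingCoeff ^ G.natDegree * G.leadingCoeff ^ F.natDegree) *
    (F.roots.bind fun α => G.roots.map fun β => X - C (α - β)).prod

/-- Sylvester matrix of polynomials P (degree m) and Q (degree n): first n rows carry
the coefficients of P, last m rows those of Q. -/
noncomputable def sylvester {R : Type*} [CommRing R] (m n : ℕ) (P Q : Polynomial R) :
    Matrix (Fin (n + m)) (Fin (n + m)) R :=
  Matrix.of fun i j =>
    if (i : ℕ) < n then
      (if (i : ℕ) ≤ (j : ℕ) ∧ (j : ℕ) ≤ (i : ℕ) + m then P.coeff (m + (i : ℕ) - (j : ℕ)) else 0)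
    else
      (if (i : ℕ) - n ≤ (j : ℕ) ∧ (j : ℕ) ≤ ((i : ℕ) - n) + n then
        Q.coeff (n + ((i : ℕ) - n) - (j : ℕ)) else 0)

/-- The resultant of P (degree m) and Q (degree n): the determinant of the Sylvester matrix. -/
noncomputable def resultant {R : Type*} [CommRing R] (m n : ℕ) (P Q : Polynomial R) : R :=
  (sylvester m n P Q).det

/-- The homogenization f_X(Y) = Y^m f(X/Y) = sum of a_i X^i Y^(m-i), as a polynomial in the
outer variable Y with coefficients in the polynomial ring over the integers. -/
noncomputable def homog (f : Polynomial ℤ) : Polynomial (Polynomial ℤ) :=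
  ∑ i ∈ Finset.range (f.natDegree + 1),
    Polynomial.C (Polynomial.C (f.coeff i) * Polynomial.X ^ i) *
      (Polynomial.X : Polynomial (Polynomial ℤ)) ^ (f.natDegree - i)

section Aux
open Finset Matrix

section Sums
variable {R : Type*} [CommRing R]

lemma icc_lo' {a b j : ℕ} (h : j < a) (g : ℕ → R) :
    ∑ l ∈ Icc a (min j b), g l = 0 := by
  rw [Finset.Icc_eq_empty (by omega), Finset.sum_empty]

lemma icc_hi {a d j : ℕ} (h : a + d ≤ j) (c : ℕ → R) (β : R) :
    ∑ l ∈ Icc a (min j (a + d)), c (a + d - l) * β ^ (j - l)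
      = β ^ (j - (a + d)) * ∑ t ∈ range (d + 1), c t * β ^ t := by
  rw [min_eq_right h, ← Finset.Ico_add_one_right_eq_Icc, Finset.sum_Ico_eq_sum_range,
    show a + d + 1 - a = d + 1 by omega, ← Finset.sum_range_reflect, Finset.mul_sum]
  refine Finset.sum_congr rfl fun t ht => ?_
  rw [Finset.mem_range] at ht
  rw [show a + d - (a + (d + 1 - 1 - t)) = t by omega,
    show j - (a + (d + 1 - 1 - t)) = (j - (a + d)) + t by omega, pow_add]
  ring

lemma icc_mid {a d j : ℕ} (h1 : a ≤ j) (h2 : j ≤ a + d) (c : ℕ → R) (β : R) :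
    ∑ l ∈ Icc a (min j (a + d)), c (a + d - l) * β ^ (j - l)
      = ∑ u ∈ range (j - a + 1), c (a + d - j + u) * β ^ u := by
  rw [min_eq_left h2, ← Finset.Ico_add_one_right_eq_Icc, Finset.sum_Ico_eq_sum_range,
    show j + 1 - a = j - a + 1 by omega, ← Finset.sum_range_reflect]
  refine Finset.sum_congr rfl fun t ht => ?_
  rw [Finset.mem_range] at ht
  rw [show a + d - (a + (j - a + 1 - 1 - t)) = a + d - j + t by omega,
    show j - (a + (j - a + 1 - 1 - t)) = t by omega]

end Sums

section Mats
variable {R : Type*} [CommRing R]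

/-- Unipotent upper-triangular matrix of powers of `β`. -/
noncomputable def Tmat (N : ℕ) (β : R) : Matrix (Fin N) (Fin N) R :=
  Matrix.of fun k j => if (k : ℕ) ≤ (j : ℕ) then β ^ ((j : ℕ) - (k : ℕ)) else 0

/-- Row operation matrix subtracting `β` times the next row, for rows `< n`. -/
noncomputable def Emat (N n : ℕ) (β : R) : Matrix (Fin N) (Fin N) R :=
  Matrix.of fun i k => if k = i then 1
    else if (i : ℕ) < n ∧ (k : ℕ) = (i : ℕ) + 1 then -β else 0

lemma det_Tmat (N : ℕ) (β : R) : (Tmat N β).det = 1 := by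
  rw [Matrix.det_of_upperTriangular (M := Tmat N β)]
  · simp [Tmat]
  · intro i j h
    have h' : (j : ℕ) < (i : ℕ) := h
    simp only [Tmat, Matrix.of_apply]
    rw [if_neg (by omega)]

lemma det_Emat (N n : ℕ) (β : R) : (Emat N n β).det = 1 := by
  rw [Matrix.det_of_upperTriangular (M := Emat N n β)]
  · simp [Emat]
  · intro i j h
    have h' : (j : ℕ) < (i : ℕ) := h
    simp only [Emat, Matrix.of_apply]
    split_ifs with h1 h2
    · exact absurd (congrArg Fin.val h1) (by omega)
    · exact absurd h2.2 (by omega)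
    · rfl

lemma Emat_mul_apply {N n : ℕ} (β : R) (A : Matrix (Fin N) (Fin N) R) (i j : Fin N)
    (hn : n < N) :
    (Emat N n β * A) i j =
      if h : (i : ℕ) < n then A i j - β * A ⟨(i : ℕ) + 1, by omega⟩ j else A i j := by
  rw [Matrix.mul_apply]
  split_ifs with h
  · have : ∀ k : Fin N, Emat N n β i k * A k j
        = (if k = i then A k j else 0) + (if k = (⟨(i : ℕ) + 1, by omega⟩ : Fin N) then -β * A k j else 0) := by
      intro k
      simp only [Emat, Matrix.of_apply]
      rcases eq_or_ne k i with rfl | hk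
      · rw [if_pos rfl, if_pos rfl, if_neg (by simp [Fin.ext_iff]), one_mul, add_zero]
      · rw [if_neg hk]
        rcases eq_or_ne k (⟨(i : ℕ) + 1, by omega⟩ : Fin N) with rfl | hk2
        · rw [if_pos ⟨h, rfl⟩, if_neg hk, if_pos rfl]
          ring
        · rw [if_neg, if_neg hk, if_neg hk2, zero_mul, add_zero]
          exact fun hc => hk2 (Fin.ext hc.2)
    rw [Finset.sum_congr rfl fun k _ => this k, Finset.sum_add_distrib,
      Finset.sum_ite_eq' Finset.univ i, Finset.sum_ite_eq' Finset.univ]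
    simp; ring
  · have : ∀ k : Fin N, Emat N n β i k * A k j = if k = i then A k j else 0 := by
      intro k
      simp only [Emat, Matrix.of_apply]
      rcases eq_or_ne k i with rfl | hk
      · rw [if_pos rfl, if_pos rfl, one_mul]
      · rw [if_neg hk, if_neg (by exact fun hc => h hc.1), zero_mul, if_neg hk]
    rw [Finset.sum_congr rfl fun k _ => this k, Finset.sum_ite_eq' Finset.univ i]
    simp

/-- Laplace expansion along the last column when it has a single nonzero entry. -/
lemma det_column_single {N : ℕ} (M : Matrix (Fin (N + 1)) (Fin (N + 1)) R) (i₀ : Fin (N + 1))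
    (c : R) (h : ∀ i, M i (Fin.last N) = if i = i₀ then c else 0) :
    M.det = (-1) ^ ((i₀ : ℕ) + N) * c *
      (M.submatrix i₀.succAbove Fin.castSucc).det := by
  rw [Matrix.det_succ_column M (Fin.last N)]
  rw [Finset.sum_eq_single i₀]
  · rw [h i₀, if_pos rfl, Fin.succAbove_last]
    try simp [Fin.val_last]
  · intro i _ hi
    rw [h i, if_neg hi]
    ring
  · simp

section ST
variable {R : Type*} [CommRing R] (m n : ℕ) (P Q : Polynomial R) (β : R)

lemma ST_P (i j : Fin (n + 1 + m)) (hi : (i : ℕ) < n + 1) :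
    (sylvester m (n + 1) P Q * Tmat (n + 1 + m) β) i j
      = ∑ l ∈ Icc (i : ℕ) (min (j : ℕ) ((i : ℕ) + m)),
          P.coeff ((i : ℕ) + m - l) * β ^ ((j : ℕ) - l) := by
  rw [Matrix.mul_apply]
  have step1 : ∀ k : Fin (n + 1 + m), sylvester m (n + 1) P Q i k * Tmat (n + 1 + m) β k j
      = (fun l : ℕ => (if l ∈ Icc (i : ℕ) (min (j : ℕ) ((i : ℕ) + m)) then
          P.coeff ((i : ℕ) + m - l) * β ^ ((j : ℕ) - l) else 0)) (k : ℕ) := by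
    intro k
    simp only [_root_.sylvester, Tmat, Matrix.of_apply, if_pos hi, Finset.mem_Icc, le_min_iff]
    by_cases hA : (i : ℕ) ≤ (k : ℕ) ∧ (k : ℕ) ≤ (i : ℕ) + m <;>
      by_cases hB : (k : ℕ) ≤ (j : ℕ)
    · rw [if_pos hA, if_pos hB, if_pos ⟨hA.1, hB, hA.2⟩,
        show m + (i : ℕ) - (k : ℕ) = (i : ℕ) + m - (k : ℕ) by omega]
    · rw [if_pos hA, if_neg hB, if_neg (fun hc => hB hc.2.1), mul_zero]
    · rw [if_neg hA, if_pos hB, if_neg (fun hc => hA ⟨hc.1, hc.2.2⟩), zero_mul]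
    · rw [if_neg hA, if_neg hB, if_neg (fun hc => hB hc.2.1), zero_mul]
  rw [Finset.sum_congr rfl fun k _ => step1 k,
    Fin.sum_univ_eq_sum_range (fun l : ℕ => (if l ∈ Icc (i : ℕ) (min (j : ℕ) ((i : ℕ) + m)) then
          P.coeff ((i : ℕ) + m - l) * β ^ ((j : ℕ) - l) else 0)) (n + 1 + m),
    Finset.sum_ite_mem, Finset.inter_eq_right.mpr]
  intro l hl
  rw [Finset.mem_Icc, le_min_iff] at hl
  exact Finset.mem_range.mpr (by have := j.isLt; omega)

lemma ST_Q (i j : Fin (n + 1 + m)) (hi : n + 1 ≤ (i : ℕ)) :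
    (sylvester m (n + 1) P Q * Tmat (n + 1 + m) β) i j
      = ∑ l ∈ Icc ((i : ℕ) - (n + 1)) (min (j : ℕ) (((i : ℕ) - (n + 1)) + (n + 1))),
          Q.coeff (((i : ℕ) - (n + 1)) + (n + 1) - l) * β ^ ((j : ℕ) - l) := by
  rw [Matrix.mul_apply]
  have step1 : ∀ k : Fin (n + 1 + m), sylvester m (n + 1) P Q i k * Tmat (n + 1 + m) β k j
      = (fun l : ℕ => (if l ∈ Icc ((i : ℕ) - (n + 1)) (min (j : ℕ) (((i : ℕ) - (n + 1)) + (n + 1))) then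
          Q.coeff (((i : ℕ) - (n + 1)) + (n + 1) - l) * β ^ ((j : ℕ) - l) else 0)) (k : ℕ) := by
    intro k
    simp only [_root_.sylvester, Tmat, Matrix.of_apply, if_neg (by omega : ¬ (i : ℕ) < n + 1),
      Finset.mem_Icc, le_min_iff]
    by_cases hA : (i : ℕ) - (n + 1) ≤ (k : ℕ) ∧ (k : ℕ) ≤ ((i : ℕ) - (n + 1)) + (n + 1) <;>
      by_cases hB : (k : ℕ) ≤ (j : ℕ)
    · rw [if_pos hA, if_pos hB, if_pos ⟨hA.1, hB, hA.2⟩,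
        show n + 1 + ((i : ℕ) - (n + 1)) - (k : ℕ) = ((i : ℕ) - (n + 1)) + (n + 1) - (k : ℕ) by omega]
    · rw [if_pos hA, if_neg hB, if_neg (fun hc => hB hc.2.1), mul_zero]
    · rw [if_neg hA, if_pos hB, if_neg (fun hc => hA ⟨hc.1, hc.2.2⟩), zero_mul]
    · rw [if_neg hA, if_neg hB, if_neg (fun hc => hB hc.2.1), zero_mul]
  rw [Finset.sum_congr rfl fun k _ => step1 k,
    Fin.sum_univ_eq_sum_range (fun l : ℕ => (if l ∈ Icc ((i : ℕ) - (n + 1)) (min (j : ℕ) (((i : ℕ) - (n + 1)) + (n + 1))) then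
          Q.coeff (((i : ℕ) - (n + 1)) + (n + 1) - l) * β ^ ((j : ℕ) - l) else 0)) (n + 1 + m),
    Finset.sum_ite_mem, Finset.inter_eq_right.mpr]
  intro l hl
  rw [Finset.mem_Icc, le_min_iff] at hl
  exact Finset.mem_range.mpr (by have := j.isLt; omega)

end ST

section EST
variable {R : Type*} [CommRing R] [Nontrivial R] (m n : ℕ) (P Q' : Polynomial R) (β : R)

set_option linter.unusedSectionVars false

lemma EST_P_row (i j : Fin (n + 1 + m)) (hi : (i : ℕ) < n) :
    (Emat (n + 1 + m) n β * (sylvester m (n + 1) P ((X - C β) * Q') * Tmat (n + 1 + m) β)) i j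
      = if (i : ℕ) ≤ (j : ℕ) ∧ (j : ℕ) ≤ (i : ℕ) + m then P.coeff (m + (i : ℕ) - (j : ℕ)) else 0 := by
  rw [Emat_mul_apply β _ i j (by omega), dif_pos hi,
    ST_P m n P _ β i j (by omega),
    ST_P m n P _ β ⟨(i : ℕ) + 1, by omega⟩ j (by simp; omega)]
  simp only [Fin.val_mk]
  rcases lt_or_ge (j : ℕ) (i : ℕ) with hj1 | hj1
  · rw [icc_lo' hj1, icc_lo' (by omega), if_neg (by omega)]; ring
  rcases le_or_gt (j : ℕ) ((i : ℕ) + m) with hj2 | hj2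
  · rw [if_pos ⟨hj1, hj2⟩, icc_mid hj1 hj2]
    rcases lt_or_ge (j : ℕ) ((i : ℕ) + 1) with hj3 | hj3
    · have hji : (j : ℕ) = (i : ℕ) := by omega
      rw [icc_lo' (by omega), hji, mul_zero, sub_zero]
      simp only [Nat.sub_self, zero_add, Finset.sum_range_one, pow_zero, mul_one]
      rw [show (i : ℕ) + m - (i : ℕ) + 0 = m + (i : ℕ) - (i : ℕ) by omega]
    · rw [icc_mid hj3 (by omega),
        show (j : ℕ) - (i : ℕ) + 1 = ((j : ℕ) - ((i : ℕ) + 1) + 1) + 1 by omega,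
        Finset.sum_range_succ', Finset.mul_sum]
      have : ∀ u ∈ Finset.range ((j : ℕ) - ((i : ℕ) + 1) + 1),
          P.coeff ((i : ℕ) + m - (j : ℕ) + (u + 1)) * β ^ (u + 1)
            = β * (P.coeff ((i : ℕ) + 1 + m - (j : ℕ) + u) * β ^ u) := by
        intro u _
        rw [show (i : ℕ) + m - (j : ℕ) + (u + 1) = (i : ℕ) + 1 + m - (j : ℕ) + u by omega,
          pow_succ]
        ring
      rw [Finset.sum_congr rfl this, ← Finset.mul_sum]
      rw [show (i : ℕ) + m - (j : ℕ) + 0 = m + (i : ℕ) - (j : ℕ) by omega]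
      ring
  · rw [if_neg (by omega), icc_hi (by omega), icc_hi (by omega),
      show (j : ℕ) - ((i : ℕ) + m) = ((j : ℕ) - ((i : ℕ) + 1 + m)) + 1 by omega, pow_succ]
    ring

lemma EST_n_row (hP : P.natDegree ≤ m) (i j : Fin (n + 1 + m)) (hi : (i : ℕ) = n) (hj : (j : ℕ) = n + m) :
    (Emat (n + 1 + m) n β * (sylvester m (n + 1) P ((X - C β) * Q') * Tmat (n + 1 + m) β)) i j
      = P.eval β := by
  rw [Emat_mul_apply β _ i j (by omega), dif_neg (by omega),
    ST_P m n P _ β i j (by omega), icc_hi (by omega),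
    show (j : ℕ) - ((i : ℕ) + m) = 0 by omega, pow_zero, one_mul,
    eval_eq_sum_range' (Nat.lt_succ_of_le hP) β]

lemma EST_Q_row (hQ' : Q'.natDegree ≤ n) (i j : Fin (n + 1 + m)) (hi : n + 1 ≤ (i : ℕ)) :
    (Emat (n + 1 + m) n β * (sylvester m (n + 1) P ((X - C β) * Q') * Tmat (n + 1 + m) β)) i j
      = if (i : ℕ) - (n + 1) ≤ (j : ℕ) ∧ (j : ℕ) ≤ ((i : ℕ) - (n + 1)) + n then
          Q'.coeff (n + ((i : ℕ) - (n + 1)) - (j : ℕ)) else 0 := by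
  have hQdeg : ((X - C β) * Q').natDegree ≤ n + 1 := by
    refine le_trans (natDegree_mul_le) ?_
    rw [natDegree_X_sub_C]
    omega
  have hQeval : ((X - C β) * Q').eval β = 0 := by simp
  have hQcoeff : ∀ t, ((X - C β) * Q').coeff (t + 1) = Q'.coeff t - β * Q'.coeff (t + 1) := by
    intro t
    rw [sub_mul, coeff_sub, coeff_X_mul, coeff_C_mul]
  rw [Emat_mul_apply β _ i j (by omega), dif_neg (by omega), ST_Q m n P _ β i j hi]
  set r := (i : ℕ) - (n + 1) with hr
  rcases lt_or_ge (j : ℕ) r with hj1 | hj1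
  · rw [icc_lo' hj1, if_neg (by omega)]
  rcases le_or_gt (j : ℕ) (r + n) with hj2 | hj2
  · rw [icc_mid hj1 (by omega), if_pos ⟨hj1, hj2⟩]
    have key : ∀ u ∈ Finset.range ((j : ℕ) - r + 1),
        ((X - C β) * Q').coeff (r + (n + 1) - (j : ℕ) + u) * β ^ u
          = (fun u => Q'.coeff ((r + n - (j : ℕ)) + u) * β ^ u) u
            - (fun u => Q'.coeff ((r + n - (j : ℕ)) + u) * β ^ u) (u + 1) := by
      intro u _
      simp only
      rw [show r + (n + 1) - (j : ℕ) + u = ((r + n - (j : ℕ)) + u) + 1 by omega,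
        hQcoeff, pow_succ]
      ring
    rw [Finset.sum_congr rfl key, Finset.sum_range_sub']
    rw [coeff_eq_zero_of_natDegree_lt
      (show Q'.natDegree < r + n - (j : ℕ) + ((j : ℕ) - r + 1) by omega), zero_mul, sub_zero,
      add_zero, pow_zero, mul_one, show r + n - (j : ℕ) = n + r - (j : ℕ) by omega]
  · rw [icc_hi (by omega), if_neg (by omega),
      ← eval_eq_sum_range' (show ((X - C β) * Q').natDegree < n + 1 + 1 by omega) β,
      hQeval, mul_zero]

end EST

lemma sylvester_det_step {R : Type*} [CommRing R] [Nontrivial R] (m n : ℕ) (P Q' : Polynomial R)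
    (β : R) (hP : P.natDegree ≤ m) (hQ' : Q'.natDegree ≤ n) :
    (sylvester m (n + 1) P ((X - C β) * Q')).det
      = (-1) ^ m * P.eval β * (sylvester m n P Q').det := by
  have hNe : (n + m) + 1 = n + 1 + m := by omega
  set M := Emat (n + 1 + m) n β *
    (sylvester m (n + 1) P ((X - C β) * Q') * Tmat (n + 1 + m) β) with hM
  have hdet : (sylvester m (n + 1) P ((X - C β) * Q')).det = M.det := by
    rw [hM, Matrix.det_mul, Matrix.det_mul, det_Emat, det_Tmat, one_mul, mul_one]
  set e : Fin ((n + m) + 1) ≃ Fin (n + 1 + m) := finCongr hNe with he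
  have hdet2 : M.det = (M.submatrix e e).det := (Matrix.det_submatrix_equiv_self e M).symm
  set i₀ : Fin ((n + m) + 1) := ⟨n, by omega⟩ with hi₀
  have hcol : ∀ i, (M.submatrix e e) i (Fin.last (n + m)) = if i = i₀ then P.eval β else 0 := by
    intro i
    have hei : ((e i : Fin (n + 1 + m)) : ℕ) = (i : ℕ) := rfl
    have hej : ((e (Fin.last (n + m)) : Fin (n + 1 + m)) : ℕ) = n + m := rfl
    rw [Matrix.submatrix_apply]
    rcases lt_trichotomy (i : ℕ) n with h | h | h
    · rw [hM, EST_P_row m n P Q' β _ _ (by rw [hei]; exact h), if_neg, if_neg]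
      · exact fun hc => by have := congrArg Fin.val hc; simp [hi₀] at this; omega
      · rw [hei, hej]; omega
    · rw [if_pos (Fin.ext (by rw [hi₀]; exact h)), hM]
      exact EST_n_row m n P Q' β hP _ _ (by rw [hei]; exact h) hej
    · rw [hM, EST_Q_row m n P Q' β hQ' _ _ (by rw [hei]; omega), if_neg, if_neg]
      · exact fun hc => by have := congrArg Fin.val hc; simp [hi₀] at this; omega
      · have := i.isLt; rw [hei, hej]; omega
  have hexp := det_column_single (M.submatrix e e) i₀ (P.eval β) hcol
  have hrow : ∀ k : Fin (n + m),
      ((i₀.succAbove k : Fin ((n + m) + 1)) : ℕ)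
        = if (k : ℕ) < n then (k : ℕ) else (k : ℕ) + 1 := by
    intro k
    rcases lt_or_ge (k : ℕ) n with h | h
    · have hlt : k.castSucc < i₀ := by
        rw [Fin.lt_iff_val_lt_val]; simpa using h
      rw [Fin.succAbove, if_pos hlt, if_pos h, Fin.coe_castSucc]
    · have hlt : ¬ k.castSucc < i₀ := by
        rw [Fin.lt_iff_val_lt_val]; simp; omega
      rw [Fin.succAbove, if_neg hlt, if_neg (by omega), Fin.val_succ]
  have hminor : (M.submatrix e e).submatrix i₀.succAbove Fin.castSucc
      = sylvester m n P Q' := by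
    ext k j
    rw [Matrix.submatrix_apply, Matrix.submatrix_apply]
    have hcol' : ((e j.castSucc : Fin (n + 1 + m)) : ℕ) = (j : ℕ) := rfl
    rcases lt_or_ge (k : ℕ) n with hk | hk
    · have hv : ((e (i₀.succAbove k) : Fin (n + 1 + m)) : ℕ) = (k : ℕ) := by
        rw [show ((e (i₀.succAbove k) : Fin (n + 1 + m)) : ℕ)
            = ((i₀.succAbove k : Fin ((n + m) + 1)) : ℕ) from rfl, hrow k, if_pos hk]
      rw [hM, EST_P_row m n P Q' β _ _ (by rw [hv]; exact hk)]
      simp only [hv, hcol', _root_.sylvester, Matrix.of_apply, if_pos hk]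
    · have hv : ((e (i₀.succAbove k) : Fin (n + 1 + m)) : ℕ) = (k : ℕ) + 1 := by
        rw [show ((e (i₀.succAbove k) : Fin (n + 1 + m)) : ℕ)
            = ((i₀.succAbove k : Fin ((n + m) + 1)) : ℕ) from rfl, hrow k, if_neg (by omega)]
      rw [hM, EST_Q_row m n P Q' β hQ' _ _ (by rw [hv]; omega)]
      simp only [hv, hcol', _root_.sylvester, Matrix.of_apply, if_neg (show ¬ (k : ℕ) < n by omega),
        show (k : ℕ) + 1 - (n + 1) = (k : ℕ) - n from by omega]
  rw [hdet, hdet2, hexp, hminor]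
  have hsign : ((i₀ : ℕ) + (n + m)) = 2 * n + m := by simp [hi₀]; omega
  rw [hsign, pow_add, pow_mul, neg_one_sq, one_pow, one_mul]

lemma sylvester_det_C {R : Type*} [CommRing R] (m : ℕ) (P : Polynomial R) (b : R) :
    (sylvester m 0 P (C b)).det = b ^ m := by
  have hdiag : sylvester m 0 P (C b) = Matrix.diagonal (fun _ => b) := by
    ext i j
    simp only [_root_.sylvester, Matrix.of_apply, Matrix.diagonal_apply]
    rw [if_neg (by omega)]
    by_cases h : i = j
    · subst h
      rw [if_pos (by omega), show 0 + ((i : ℕ) - 0) - (i : ℕ) = 0 by omega, coeff_C_zero,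
        if_pos rfl]
    · rw [if_neg (fun hc => h (Fin.ext (by omega))), if_neg h]
  rw [hdiag, Matrix.det_diagonal, Finset.prod_const, Finset.card_univ, Fintype.card_fin,
    Nat.zero_add]

lemma sylvester_det_linear {R : Type*} [CommRing R] [Nontrivial R] (m : ℕ) (P : Polynomial R)
    (hP : P.natDegree ≤ m) (b : R) :
    ∀ (n : ℕ) (s : Multiset R), Multiset.card s = n →
      (sylvester m n P (C b * (s.map fun β => X - C β).prod)).det
        = (-1) ^ (m * n) * b ^ m * (s.map fun β => P.eval β).prod := by
  intro n
  induction n with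
  | zero =>
    intro s hs
    rw [Multiset.card_eq_zero] at hs
    subst hs
    simp [sylvester_det_C]
  | succ n ih =>
    intro s hs
    obtain ⟨β, t, rfl⟩ : ∃ β t, s = β ::ₘ t := by
      rcases Multiset.exists_mem_of_ne_zero
        (show s ≠ 0 by intro h; subst h; simp at hs) with ⟨β, hβ⟩
      rcases Multiset.exists_cons_of_mem hβ with ⟨t, rfl⟩
      exact ⟨β, t, rfl⟩
    have ht : Multiset.card t = n := by
      rw [Multiset.card_cons] at hs; omega
    have hQ : C b * ((β ::ₘ t).map fun x => X - C x).prod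
        = (X - C β) * (C b * (t.map fun x => X - C x).prod) := by
      rw [Multiset.map_cons, Multiset.prod_cons]; ring
    have hQ't : (C b * (t.map fun x => X - C x).prod).natDegree ≤ n := by
      refine le_trans natDegree_mul_le ?_
      rw [natDegree_C, zero_add]
      refine le_trans (natDegree_multiset_prod_le _) ?_
      simp [Multiset.map_map, Function.comp_def, natDegree_X_sub_C, ht]
    rw [hQ, sylvester_det_step m n P _ β hP hQ't, ih t ht, Multiset.map_cons,
      Multiset.prod_cons, Nat.mul_succ, pow_add]
    ring

lemma scaleRootsXsubCAux (α z : ℂ) : (X - C α).scaleRoots z = X - C (α * z) := by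
  ext k
  rw [coeff_scaleRoots, natDegree_X_sub_C]
  rcases k with _ | _ | k <;>
    simp [coeff_X, coeff_C, coeff_sub, Nat.succ_ne_zero, mul_comm]

lemma scaleRoots_linear (t : Multiset ℂ) (a : ℂ) (z : ℂ) :
    (C a * (t.map fun α => X - C α).prod).scaleRoots z
      = C a * (t.map fun α => X - C (α * z)).prod := by
  induction t using Multiset.induction with
  | empty => simp [scaleRoots_C]
  | cons α t ih =>
    have h1 : C a * ((α ::ₘ t).map fun x => X - C x).prod
        = (X - C α) * (C a * (t.map fun x => X - C x).prod) := by
      rw [Multiset.map_cons, Multiset.prod_cons]; ring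
    rw [h1, mul_scaleRoots_of_noZeroDivisors, ih, scaleRootsXsubCAux,
      Multiset.map_cons, Multiset.prod_cons]
    ring

lemma homog_map_natDegree_le (f : Polynomial ℤ) :
    ((homog f).map (mapRingHom (Int.castRingHom ℂ))).natDegree ≤ f.natDegree := by
  rw [homog, Polynomial.map_sum]
  refine natDegree_sum_le_of_forall_le _ _ fun i hi => ?_
  rw [Polynomial.map_mul, Polynomial.map_C, Polynomial.map_pow, Polynomial.map_X]
  refine le_trans natDegree_mul_le ?_
  rw [natDegree_C, natDegree_X_pow, zero_add]
  omega

lemma homog_map_eval (f : Polynomial ℤ) (z : ℂ) :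
    (((homog f).map (mapRingHom (Int.castRingHom ℂ))).eval (Polynomial.C z))
      = (cmap f).scaleRoots z := by
  have hdegF : (cmap f).natDegree = f.natDegree :=
    natDegree_map_eq_of_injective Int.cast_injective f
  rw [homog, Polynomial.map_sum, eval_finset_sum]
  ext k
  rw [finset_sum_coeff, coeff_scaleRoots, hdegF]
  have hterm : ∀ i, (((Polynomial.C (Polynomial.C (f.coeff i) * Polynomial.X ^ i) *
      (Polynomial.X : Polynomial (Polynomial ℤ)) ^ (f.natDegree - i)).map
        (mapRingHom (Int.castRingHom ℂ))).eval (Polynomial.C z)).coeff k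
      = if k = i then (cmap f).coeff i * z ^ (f.natDegree - i) else 0 := by
    intro i
    rw [Polynomial.map_mul, Polynomial.map_C, Polynomial.map_pow, Polynomial.map_X, eval_mul,
      eval_pow, eval_C, eval_X, coe_mapRingHom, Polynomial.map_mul, Polynomial.map_C,
      Polynomial.map_pow, Polynomial.map_X, ← C_pow, mul_comm _ ((C (z ^ (f.natDegree - i)))),
      ← mul_assoc, ← C_mul, coeff_C_mul, coeff_X_pow]
    have hc : (cmap f).coeff i = (Int.castRingHom ℂ) (f.coeff i) := coeff_map _ _
    split_ifs with h
    · rw [mul_one, hc]; ring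
    · rw [mul_zero]
  rw [Finset.sum_congr rfl fun i _ => hterm i, Finset.sum_ite_eq]
  split_ifs with h
  · rfl
  · rw [Finset.mem_range] at h
    rw [coeff_eq_zero_of_natDegree_lt (by rw [hdegF]; omega), zero_mul]


end Mats
end Aux

open Finset Matrix in
/-- The resultant product equals, up to the sign (-1)^(mn), the resultant of the
homogenization f_X(Y) and g(Y) over the ring of integer polynomials in X; consequently
its degree is mn. -/
theorem rprod_eq_resultant (f g : Polynomial ℤ)
    (hf : 1 ≤ f.natDegree) (hg : 1 ≤ g.natDegree) :
    rprod (cmap f) (cmap g) =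
      (-1 : Polynomial ℂ) ^ (f.natDegree * g.natDegree) *
        Polynomial.map (Int.castRingHom ℂ)
          (resultant f.natDegree g.natDegree (homog f) (g.map Polynomial.C)) ∧
    (rprod (cmap f) (cmap g)).natDegree = f.natDegree * g.natDegree := by
  have hf0 : f ≠ 0 := fun h => by simp [h] at hf
  have hg0 : g ≠ 0 := fun h => by simp [h] at hg
  have hF0 : cmap f ≠ 0 := by
    rw [cmap, Ne, Polynomial.map_eq_zero_iff Int.cast_injective]
    exact hf0
  have hG0 : cmap g ≠ 0 := by
    rw [cmap, Ne, Polynomial.map_eq_zero_iff Int.cast_injective]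
    exact hg0
  have hdegF : (cmap f).natDegree = f.natDegree :=
    natDegree_map_eq_of_injective Int.cast_injective f
  have hdegG : (cmap g).natDegree = g.natDegree :=
    natDegree_map_eq_of_injective Int.cast_injective g
  have hrootsF : (cmap f).roots.card = (cmap f).natDegree :=
    splits_iff_card_roots.mp (IsAlgClosed.splits (cmap f))
  have hrootsG : (cmap g).roots.card = (cmap g).natDegree :=
    splits_iff_card_roots.mp (IsAlgClosed.splits (cmap g))
  have hrootsF' : (cmap f).roots.card = f.natDegree := by rw [hrootsF, hdegF]
  have hrootsG' : (cmap g).roots.card = g.natDegree := by rw [hrootsG, hdegG]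
  have hFfact := C_leadingCoeff_mul_prod_multiset_X_sub_C hrootsF
  have hGfact := C_leadingCoeff_mul_prod_multiset_X_sub_C hrootsG
  set aF := (cmap f).leadingCoeff with haF
  set bG := (cmap g).leadingCoeff with hbG
  set ψ : ℤ →+* ℂ := Int.castRingHom ℂ with hψ
  set φ : Polynomial ℤ →+* Polynomial ℂ := mapRingHom ψ with hφ
  set Phat : Polynomial (Polynomial ℂ) := (homog f).map φ with hPhatdef
  -- mapped resultant is a Sylvester determinant over ℂ[X]
  have hres : Polynomial.map ψ
        (resultant f.natDegree g.natDegree (homog f) (g.map Polynomial.C))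
      = (sylvester f.natDegree g.natDegree Phat ((g.map Polynomial.C).map φ)).det := by
    rw [_root_.resultant,
      show Polynomial.map ψ ((sylvester f.natDegree g.natDegree (homog f)
        (g.map Polynomial.C)).det) = φ ((sylvester f.natDegree g.natDegree (homog f)
          (g.map Polynomial.C)).det) from rfl,
      RingHom.map_det, RingHom.mapMatrix_apply]
    congr 1
    refine Matrix.ext fun i j => ?_
    rw [Matrix.map_apply]
    simp only [_root_.sylvester, Matrix.of_apply]
    split_ifs <;> first | exact (coeff_map _ _).symm | exact (map_zero φ)
  have hQhat : (g.map (Polynomial.C : ℤ →+* Polynomial ℤ)).map φ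
      = (cmap g).map (Polynomial.C : ℂ →+* Polynomial ℂ) := by
    rw [Polynomial.map_map, cmap, Polynomial.map_map]
    have : φ.comp (Polynomial.C : ℤ →+* Polynomial ℤ)
        = (Polynomial.C : ℂ →+* Polynomial ℂ).comp ψ := by
      refine RingHom.ext fun a => ?_
      simp only [RingHom.comp_apply, hφ, coe_mapRingHom, Polynomial.map_C]
    rw [this]
  set t : Multiset (Polynomial ℂ) :=
    (cmap g).roots.map (fun z => (Polynomial.C z : Polynomial ℂ)) with ht
  have hfactG2 : (cmap g).map (Polynomial.C : ℂ →+* Polynomial ℂ)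
      = Polynomial.C (Polynomial.C bG) * (t.map fun β => X - Polynomial.C β).prod := by
    conv_lhs => rw [← hGfact]
    rw [Polynomial.map_mul, Polynomial.map_C]
    congr 1
    rw [← coe_mapRingHom, map_multiset_prod, Multiset.map_map, ht, Multiset.map_map]
    refine congrArg _ (Multiset.map_congr rfl fun z _ => ?_)
    simp
  have hcardt : Multiset.card t = g.natDegree := by
    rw [ht, Multiset.card_map, hrootsG']
  have hPhatdeg : Phat.natDegree ≤ f.natDegree := homog_map_natDegree_le f
  have hmain := sylvester_det_linear f.natDegree Phat hPhatdeg (Polynomial.C bG)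
    g.natDegree t hcardt
  have hevalP : ∀ z : ℂ, Phat.eval (Polynomial.C z)
      = Polynomial.C aF * ((cmap f).roots.map fun α => X - Polynomial.C (α * z)).prod := by
    intro z
    rw [hPhatdef, homog_map_eval f z]
    conv_lhs => rw [← hFfact]
    rw [scaleRoots_linear]
  have hprodmap : (t.map fun β => Phat.eval β).prod
      = (Polynomial.C aF) ^ g.natDegree *
        (((cmap f).roots.bind fun α =>
          (cmap g).roots.map fun z => X - Polynomial.C (α * z)).prod) := by
    rw [ht, Multiset.map_map,
      show Multiset.map ((fun β => Phat.eval β) ∘ fun z => (Polynomial.C z : Polynomial ℂ))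
          (cmap g).roots
        = Multiset.map (fun z => Polynomial.C aF *
            ((cmap f).roots.map fun α => X - Polynomial.C (α * z)).prod) (cmap g).roots
        from Multiset.map_congr rfl fun z _ => hevalP z, Multiset.prod_map_mul]
    congr 1
    · rw [Multiset.map_const', Multiset.prod_replicate, hrootsG']
    · rw [← Multiset.prod_bind, Multiset.bind_map_comm]
  have h2 : (-1 : Polynomial ℂ) ^ (f.natDegree * g.natDegree) *
      (-1 : Polynomial ℂ) ^ (f.natDegree * g.natDegree) = 1 := by
    rw [← pow_add, ← two_mul, pow_mul, neg_one_sq, one_pow]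
  constructor
  · rw [hres, hQhat, hfactG2, hmain, hprodmap, rprod, hdegF, hdegG, ← haF, ← hbG,
      C_mul, C_pow, C_pow,
      show ∀ (u v : Polynomial ℂ), ((-1 : Polynomial ℂ) ^ (f.natDegree * g.natDegree)) *
          ((-1 : Polynomial ℂ) ^ (f.natDegree * g.natDegree) * u * v) = u * v from
        fun u v => by rw [← mul_assoc, ← mul_assoc, h2, one_mul]]
    ring
  · rw [rprod, hdegF, hdegG, ← haF, ← hbG]
    set B := ((cmap f).roots.bind fun α =>
      (cmap g).roots.map fun β => X - C (α * β)) with hB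
    have hmon : ∀ p ∈ B, p.Monic := by
      intro p hp
      rw [hB, Multiset.mem_bind] at hp
      obtain ⟨α, _, hp⟩ := hp
      rw [Multiset.mem_map] at hp
      obtain ⟨β, _, rfl⟩ := hp
      exact monic_X_sub_C _
    have hBprod : B.prod.Monic := by
      simpa using monic_multiset_prod_of_monic B id fun p hp => hmon p hp
    have hcardB : Multiset.card B = f.natDegree * g.natDegree := by
      rw [hB, Multiset.card_bind]
      simp [Function.comp_def, Multiset.card_map, hrootsG', Multiset.map_const',
        Multiset.sum_replicate, hrootsF']
    have hBdeg : B.prod.natDegree = f.natDegree * g.natDegree := by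
      rw [natDegree_multiset_prod_of_monic _ hmon,
        show B.map natDegree = B.map (fun _ => 1) from Multiset.map_congr rfl fun p hp => by
          rw [hB, Multiset.mem_bind] at hp
          obtain ⟨α, _, hp⟩ := hp
          rw [Multiset.mem_map] at hp
          obtain ⟨β, _, rfl⟩ := hp
          exact natDegree_X_sub_C _,
        Multiset.map_const', Multiset.sum_replicate, smul_eq_mul, mul_one, hcardB]
    have hc : aF ^ g.natDegree * bG ^ f.natDegree ≠ 0 :=
      mul_ne_zero (pow_ne_zero _ (leadingCoeff_ne_zero.mpr hF0))
        (pow_ne_zero _ (leadingCoeff_ne_zero.mpr hG0))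
    rw [natDegree_mul' (by rw [leadingCoeff_C, hBprod.leadingCoeff, mul_one]; exact hc),
      natDegree_C, zero_add, hBdeg]
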